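/- arXiv:2503.08691 — 3 statements merged into one kernel-verified Lean document; each statement's English description precedes it below -/
import Mathlib

section
/- There exist two finite connected topological spaces X₁ and X₂, a bijection f from the regular closed subsets of X₁ onto the regular closed subsets of X₂ satisfying f(∅)=∅, f(X₁)=X₂, f(A∪B)=f(A)∪f(B), f(closure(X₁∖A)) = closure(X₂∖f(A)), and A∩B ≠ ∅ if and only if f(A)∩f(B) ≠ ∅ for all regular closed A, B of X₁, and a regular closed subset A of X₁ such that the interior of A is a nonempty connected subspace of X₁ while the interior of f(A) is not a preconnected subspace of X₂. Hence internal connectedness is not definable from the contact relation on regular closed algebras, even over connected spaces. -/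
/-- A set is regular closed if it equals the closure of its interior. -/
def RegClosed {X : Type} [TopologicalSpace X] (A : Set X) : Prop :=
  A = closure (interior A)

/-- A contact-preserving Boolean isomorphism between the regular closed algebras of
`X₁` and `X₂`: a bijection `f` from the regular closed subsets of `X₁` onto those of
`X₂` with `f ∅ = ∅`, `f X₁ = X₂`, `f (A ∪ B) = f A ∪ f B`,
`f (closure (X₁ ∖ A)) = closure (X₂ ∖ f A)`, and `A ∩ B ≠ ∅ ↔ f A ∩ f B ≠ ∅`. -/
def ContactIso {X₁ X₂ : Type} [TopologicalSpace X₁] [TopologicalSpace X₂]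
    (f : Set X₁ → Set X₂) : Prop :=
  Set.BijOn f {A : Set X₁ | RegClosed A} {B : Set X₂ | RegClosed B} ∧
  f ∅ = ∅ ∧
  f Set.univ = Set.univ ∧
  (∀ A B : Set X₁, RegClosed A → RegClosed B → f (A ∪ B) = f A ∪ f B) ∧
  (∀ A : Set X₁, RegClosed A → f (closure Aᶜ) = closure (f A)ᶜ) ∧
  (∀ A B : Set X₁, RegClosed A → RegClosed B →
    ((A ∩ B).Nonempty ↔ (f A ∩ f B).Nonempty))

/-!
Let `X₁` be the finite poset with minimal points `p, q` and maximal points `a, b, c`,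
`p < a, b, c` and `q < a, b`, carrying its Alexandrov topology (open sets = up-sets), and let
`X₂ = X₁ ∖ {q}`. Restriction to a dense open subspace is always an isomorphism of regular
closed algebras, and here it also preserves contact: every neighbourhood of `p` is dense, so
every nonempty regular closed set of `X₁` contains `p ∈ X₂`. But `A = closure {a, b}` has
interior `{q, a, b}`, connected through `q`, while the interior of `A ∩ X₂` is the discrete
pair `{a, b}`.
-/

open Set Topology

theorem regClosed_closure {X : Type} [TopologicalSpace X] {U : Set X} (hU : IsOpen U) :
    RegClosed (closure U) :=
  le_antisymm (closure_mono (interior_maximal subset_closure hU))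
    ((closure_mono interior_subset).trans_eq closure_closure)

section Preimage

variable {X Y : Type} [TopologicalSpace X] [TopologicalSpace Y] {φ : Y → X}

theorem RegClosed.preimage {A : Set X} (hA : RegClosed A) (hc : Continuous φ)
    (ho : IsOpenMap φ) : RegClosed (φ ⁻¹' A) := by
  unfold RegClosed
  rw [← ho.preimage_interior_eq_interior_preimage hc,
    ← ho.preimage_closure_eq_closure_preimage hc, ← hA]

theorem RegClosed.eq_closure_image_interior_preimage {A : Set X} (hA : RegClosed A)
    (hc : Continuous φ) (ho : IsOpenMap φ) (hd : DenseRange φ) :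
    A = closure (φ '' interior (φ ⁻¹' A)) := by
  rw [← ho.preimage_interior_eq_interior_preimage hc, image_preimage_eq_inter_range]
  refine hA.trans (le_antisymm ?_ (closure_mono inter_subset_left))
  exact closure_minimal (hd.open_subset_closure_inter isOpen_interior) isClosed_closure

theorem RegClosed.preimage_closure_image_interior {B : Set Y} (hB : RegClosed B)
    (hc : Continuous φ) (ho : IsOpenMap φ) (hi : φ.Injective) :
    φ ⁻¹' closure (φ '' interior B) = B := by
  rw [ho.preimage_closure_eq_closure_preimage hc, preimage_image_eq _ hi, ← hB]

theorem RegClosed.mem_of_nonempty {x : X} (hx : ∀ s ∈ 𝓝 x, Dense s) {A : Set X}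
    (hA : RegClosed A) (hne : A.Nonempty) : x ∈ A := by
  have hint : (interior A).Nonempty := closure_nonempty_iff.mp (hA ▸ hne)
  rw [hA, mem_closure_iff_nhds]
  intro s hs
  rw [inter_comm]
  exact (hx s hs).inter_open_nonempty _ isOpen_interior hint

theorem contactIso_preimage (hφ : IsOpenEmbedding φ) {y : Y}
    (hy : ∀ s ∈ 𝓝 (φ y), Dense s) :
    ContactIso (φ ⁻¹' · : Set X → Set Y) := by
  have hc := hφ.continuous
  have ho := hφ.isOpenMap
  have hd : DenseRange φ := hy _ (hφ.isOpen_range.mem_nhds (mem_range_self y))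
  refine ⟨⟨fun _ hA => hA.preimage hc ho, fun A hA B hB hAB => ?_, fun B hB =>
      ⟨_, regClosed_closure (ho _ isOpen_interior),
        hB.preimage_closure_image_interior hc ho hφ.injective⟩⟩,
    preimage_empty, preimage_univ, fun _ _ _ _ => preimage_union, fun A _ => ?_,
    fun A B hA hB => ⟨fun hAB => ?_, fun ⟨z, hzA, hzB⟩ => ⟨φ z, hzA, hzB⟩⟩⟩
  · calc A = closure (φ '' interior (φ ⁻¹' A)) :=
          hA.eq_closure_image_interior_preimage hc ho hd
      _ = closure (φ '' interior (φ ⁻¹' B)) := by rw [show φ ⁻¹' A = φ ⁻¹' B from hAB]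
      _ = B := (hB.eq_closure_image_interior_preimage hc ho hd).symm
  · simp only [ho.preimage_closure_eq_closure_preimage hc, preimage_compl]
  · exact ⟨y, hA.mem_of_nonempty hy (hAB.mono inter_subset_left),
      hB.mem_of_nonempty hy (hAB.mono inter_subset_right)⟩

end Preimage

namespace Topology.IsUpperSet

variable {α : Type*} [Preorder α] [TopologicalSpace α] [Topology.IsUpperSet α]

theorem isPreconnected_Ici (x : α) : IsPreconnected (Ici x) := by
  intro u v hu hv hcover ⟨y, hy, hyu⟩ ⟨z, hz, hzv⟩
  rw [isOpen_iff_isUpperSet] at hu hv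
  rcases hcover self_mem_Ici with hxu | hxv
  · exact ⟨z, hz, hu hz hxu, hzv⟩
  · exact ⟨y, hy, hyu, hv hy hxv⟩

theorem isConnected_Ici (x : α) : IsConnected (Ici x) :=
  ⟨nonempty_Ici, isPreconnected_Ici x⟩

theorem isOpen_Ici (x : α) : IsOpen (Ici x) :=
  isOpen_iff_isUpperSet.mpr (isUpperSet_Ici x)

theorem isOpen_singleton_of_isMax {β : Type*} [PartialOrder β] [TopologicalSpace β]
    [Topology.IsUpperSet β] {x : β} (hx : IsMax x) : IsOpen {x} :=
  hx.Ici_eq ▸ isOpen_Ici x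

theorem mem_interior_iff_Ici_subset {s : Set α} {x : α} : x ∈ interior s ↔ Ici x ⊆ s := by
  rw [mem_interior_iff_mem_nhds, nhds_eq_principal_Ici, Filter.mem_principal]

end Topology.IsUpperSet

inductive Pt
  | p | q | a | b | c
  deriving DecidableEq

namespace Pt

open Topology.IsUpperSet

instance : Fintype Pt := ⟨{p, q, a, b, c}, fun x => by cases x <;> decide⟩

instance : LE Pt where
  le x y := x = y ∨ x = p ∧ y ≠ q ∨ x = q ∧ (y = a ∨ y = b)

instance : DecidableRel (α := Pt) (· ≤ ·) := fun x y =>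
  inferInstanceAs (Decidable (x = y ∨ x = p ∧ y ≠ q ∨ x = q ∧ (y = a ∨ y = b)))

instance : PartialOrder Pt where
  le_refl := by decide
  le_trans := by decide
  le_antisymm := by decide

instance : TopologicalSpace Pt := Topology.upperSet Pt

instance : Topology.IsUpperSet Pt := ⟨rfl⟩

theorem isMax_a : IsMax a := by
  intro y
  revert y
  decide

theorem isMax_b : IsMax b := by
  intro y
  revert y
  decide

theorem dense_Ici_p : Dense (Ici p) := by
  rw [dense_iff_closure_eq, closure_eq_lowerClosure, eq_univ_iff_forall]
  simp only [SetLike.mem_coe, mem_lowerClosure, mem_Ici]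
  decide

theorem dense_of_mem_nhds_p : ∀ s ∈ 𝓝 p, Dense s := fun _ hs =>
  dense_Ici_p.mono (by rwa [nhds_eq_principal_Ici, Filter.mem_principal] at hs)

theorem isOpen_pair_ab : IsOpen ({a, b} : Set Pt) := by
  rw [insert_eq]
  exact (isOpen_singleton_of_isMax isMax_a).union (isOpen_singleton_of_isMax isMax_b)

theorem interior_closure_pair_ab : interior (closure ({a, b} : Set Pt)) = Ici q := by
  ext x
  simp only [mem_interior_iff_Ici_subset, closure_eq_lowerClosure, subset_def, mem_Ici,
    SetLike.mem_coe, mem_lowerClosure, mem_insert_iff, mem_singleton_iff]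
  revert x
  decide

theorem Ici_q_inter_Ici_p : Ici q ∩ Ici p = ({a, b} : Set Pt) := by
  ext x
  simp only [mem_inter_iff, mem_Ici, mem_insert_iff, mem_singleton_iff]
  revert x
  decide

theorem not_isPreconnected_pair_ab : ¬ IsPreconnected ({a, b} : Set Pt) := fun h => by
  obtain ⟨x, -, hxa, hxb⟩ := h {a} {b} (isOpen_singleton_of_isMax isMax_a)
    (isOpen_singleton_of_isMax isMax_b) (insert_eq a {b}).subset
    ⟨a, mem_insert a _, rfl⟩ ⟨b, mem_insert_of_mem a rfl, rfl⟩
  exact absurd ((mem_singleton_iff.mp hxa).symm.trans hxb) (by decide)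

end Pt

open Pt Topology.IsUpperSet in
/-- There exist finite connected spaces X₁, X₂, a contact-preserving
Boolean isomorphism f between their regular closed algebras, and a regular closed
A ⊆ X₁ whose interior is a nonempty connected subspace of X₁ while the interior of
f(A) is not a preconnected subspace of X₂.  Hence internal connectedness is not
definable from contact on regular closed algebras, even over connected spaces. -/
theorem stmt10 :
    ∃ (X₁ X₂ : Type) (t₁ : TopologicalSpace X₁) (t₂ : TopologicalSpace X₂),
      Finite X₁ ∧ Finite X₂ ∧
      @ConnectedSpace X₁ t₁ ∧ @ConnectedSpace X₂ t₂ ∧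
      ∃ f : Set X₁ → Set X₂,
        @ContactIso X₁ X₂ t₁ t₂ f ∧
        ∃ A : Set X₁,
          @RegClosed X₁ t₁ A ∧
          @IsConnected X₁ t₁ (@interior X₁ t₁ A) ∧
          ¬ @IsPreconnected X₂ t₂ (@interior X₂ t₂ (f A)) := by
  refine ⟨Pt, Ici p, inferInstance, inferInstance, inferInstance, inferInstance,
    connectedSpace_iff_univ.mpr (dense_Ici_p.closure_eq ▸ (isConnected_Ici p).closure),
    isConnected_iff_connectedSpace.mp (isConnected_Ici p), (Subtype.val ⁻¹' ·),
    contactIso_preimage (isOpen_Ici p).isOpenEmbedding_subtypeVal (y := ⟨p, self_mem_Ici⟩)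
      dense_of_mem_nhds_p,
    closure {a, b}, regClosed_closure isOpen_pair_ab,
    interior_closure_pair_ab ▸ isConnected_Ici q, ?_⟩
  rw [← (isOpen_Ici p).isOpenMap_subtype_val.preimage_interior_eq_interior_preimage
      continuous_subtype_val, interior_closure_pair_ab,
    ← IsInducing.subtypeVal.isPreconnected_image, image_preimage_eq_inter_range,
    Subtype.range_coe, Ici_q_inter_Ici_p]
  exact not_isPreconnected_pair_ab
end

section
/- Let X₁ and X₂ be topological spaces and let f be a contact-preserving Boolean isomorphism between their regular closed algebras. If there is a regular closed subset A of X₁ whose interior is a nonempty connected subspace of X₁ while the interior of f(A) is not a preconnected subspace of X₂, then the family of regular closed subsets of X₁ has at least eight elements (and hence so does that of X₂). -/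
theorem Set.SurjOn.exists_finset_subset_le_card {α β : Type*} {f : α → β} {S : Set α}
    {T : Set β} [Nonempty α] (hf : Set.SurjOn f S T) {n : ℕ}
    (hT : ∃ t : Finset β, ↑t ⊆ T ∧ n ≤ t.card) :
    ∃ s : Finset α, ↑s ⊆ S ∧ n ≤ s.card := by
  classical
  obtain ⟨t, htT, hnt⟩ := hT
  refine ⟨t.image (Function.invFunOn f S), ?_, ?_⟩
  · rw [Finset.coe_image]
    exact (hf.mapsTo_invFunOn.mono_left htT).image_subset
  · rwa [Finset.card_image_of_injOn (hf.rightInvOn_invFunOn.injOn.mono htT)]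

theorem IsOpen.exists_open_split_of_not_isPreconnected {X : Type*} [TopologicalSpace X]
    {s : Set X} (hs : IsOpen s) (h : ¬IsPreconnected s) :
    ∃ U V : Set X, IsOpen U ∧ IsOpen V ∧ Disjoint U V ∧ U.Nonempty ∧ V.Nonempty ∧
      s = U ∪ V := by
  simp only [IsPreconnected, not_forall, Set.not_nonempty_iff_eq_empty] at h
  obtain ⟨u, v, hu, hv, hsuv, hsu, hsv, hsuv'⟩ := h
  refine ⟨s ∩ u, s ∩ v, hs.inter hu, hs.inter hv, ?_, hsu, hsv, ?_⟩
  · exact Set.disjoint_left.mpr fun x ⟨hxs, hxu⟩ ⟨_, hxv⟩ =>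
      (hsuv'.subset ⟨hxs, hxu, hxv⟩ : x ∈ (∅ : Set X))
  · rw [← Set.inter_union_distrib_left, Set.inter_eq_left.mpr hsuv]

namespace RegClosed

variable {X : Type} [TopologicalSpace X]

theorem of_isClosed {A : Set X} (hA : IsClosed A) (h : A ⊆ closure (interior A)) :
    RegClosed A :=
  h.antisymm (closure_minimal interior_subset hA)

theorem isClosed {A : Set X} (hA : RegClosed A) : IsClosed A :=
  hA ▸ isClosed_closure

theorem closure_of_isOpen {U : Set X} (hU : IsOpen U) : RegClosed (closure U) :=
  of_isClosed isClosed_closure (closure_mono (hU.subset_interior_iff.mpr subset_closure))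

theorem union {A B : Set X} (hA : RegClosed A) (hB : RegClosed B) : RegClosed (A ∪ B) :=
  of_isClosed (hA.isClosed.union hB.isClosed) <| Set.union_subset
    (hA.le.trans (closure_mono (interior_mono Set.subset_union_left)))
    (hB.le.trans (closure_mono (interior_mono Set.subset_union_right)))

theorem biUnion {ι : Type*} (T : Finset ι) {P : ι → Set X} (hP : ∀ i, RegClosed (P i)) :
    RegClosed (⋃ i ∈ T, P i) :=
  of_isClosed (isClosed_biUnion_finset fun i _ => (hP i).isClosed) <| Set.iUnion₂_subset
    fun i hi => (hP i).le.trans (closure_mono (interior_mono (Set.subset_biUnion_of_mem hi)))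

theorem exists_finset_two_pow_card_le {ι : Type*} [Fintype ι] {P : ι → Set X}
    (hP : ∀ i, RegClosed (P i)) (x : ι → X) (hx : ∀ i j, x i ∈ P j ↔ i = j) :
    ∃ s : Finset (Set X), ↑s ⊆ {B : Set X | RegClosed B} ∧ 2 ^ Fintype.card ι ≤ s.card := by
  classical
  have hmem (T : Finset ι) (i : ι) : x i ∈ ⋃ j ∈ T, P j ↔ i ∈ T := by
    simp only [Set.mem_iUnion, hx, exists_prop, exists_eq_right']
  have hinj : Function.Injective fun T : Finset ι => ⋃ j ∈ T, P j :=
    fun T T' (h : ⋃ j ∈ T, P j = ⋃ j ∈ T', P j) => by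
    ext i
    rw [← hmem T, h, hmem T']
  refine ⟨Finset.univ.image fun T : Finset ι => ⋃ j ∈ T, P j, ?_, ?_⟩
  · rw [Finset.coe_image]
    rintro _ ⟨T, -, rfl⟩
    exact biUnion T hP
  · rw [Finset.card_image_of_injective _ hinj, Finset.card_univ, Fintype.card_finset]

theorem inter_nonempty_of_union_eq {A A₁ A₂ : Set X} (hA : RegClosed A)
    (hAc : IsPreconnected (interior A)) (h₁ : IsClosed A₁) (h₂ : IsClosed A₂)
    (hA₁₂ : A₁ ∪ A₂ = A) (hne₁ : A₁ ≠ A) (hne₂ : A₂ ≠ A) : (A₁ ∩ A₂).Nonempty := by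
  have hsub : interior A ⊆ A₁ ∪ A₂ := hA₁₂ ▸ interior_subset
  have hmeet {B C : Set X} (hB : IsClosed B) (hBC : B ∪ C = A) (hne : B ≠ A)
      (hcover : interior A ⊆ C ∪ B) : (interior A ∩ C).Nonempty := by
    by_contra h
    refine hne (subset_antisymm (hBC ▸ Set.subset_union_left) ?_)
    rw [hA]
    exact closure_minimal (fun y hy => (hcover hy).resolve_left fun hyC => h ⟨y, hy, hyC⟩) hB
  obtain ⟨y, -, hy⟩ := isPreconnected_closed_iff.mp hAc A₁ A₂ h₁ h₂ hsub
    (hmeet h₂ (by rw [Set.union_comm, hA₁₂]) hne₂ hsub)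
    (hmeet h₁ hA₁₂ hne₁ (by rwa [Set.union_comm]))
  exact ⟨y, hy⟩

end RegClosed

section Split

variable {X : Type} [TopologicalSpace X] {F U V : Set X}

theorem closure_union_closure_eq_of_interior_eq (hF : RegClosed F) (hFUV : interior F = U ∪ V) :
    closure U ∪ closure V = F := by
  rw [← closure_union, ← hFUV, ← hF]

theorem closure_ne_of_interior_eq (hV : IsOpen V) (hUV : Disjoint U V)
    (hFUV : interior F = U ∪ V) (hVne : V.Nonempty) : closure U ≠ F := by
  obtain ⟨c, hc⟩ := hVne
  intro h
  have hcF : c ∈ F := interior_subset (hFUV ▸ Set.mem_union_right U hc)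
  exact (hUV.symm.closure_right hV).notMem_of_mem_left hc (h ▸ hcF)

theorem exists_finset_eight_le_card_of_interior_eq (hF : RegClosed F) (hU : IsOpen U)
    (hV : IsOpen V) (hUV : Disjoint U V) (hFUV : interior F = U ∪ V) (hUne : U.Nonempty)
    (hVne : V.Nonempty) (hmeet : (closure U ∩ closure V).Nonempty) :
    ∃ s : Finset (Set X), ↑s ⊆ {B : Set X | RegClosed B} ∧ 8 ≤ s.card := by
  obtain ⟨b, hb⟩ := hUne
  obtain ⟨c, hc⟩ := hVne
  obtain ⟨y, hyU, hyV⟩ := hmeet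
  have hbV : b ∉ closure V := (hUV.closure_right hU).notMem_of_mem_left hb
  have hcU : c ∉ closure U := (hUV.symm.closure_right hV).notMem_of_mem_left hc
  -- `closure Fᶜ = (U ∪ V)ᶜ` and `y ∉ U ∪ V`, so `Fᶜ` is nonempty.
  have hy : y ∈ closure Fᶜ := by
    rw [closure_compl, hFUV]
    rintro (hyU' | hyV')
    · exact (hUV.closure_right hU).notMem_of_mem_left hyU' hyV
    · exact (hUV.symm.closure_right hV).notMem_of_mem_left hyV' hyU
  obtain ⟨d, hd⟩ := closure_nonempty_iff.mp ⟨y, hy⟩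
  have hFUV' := closure_union_closure_eq_of_interior_eq hF hFUV
  have hdU : d ∉ closure U := fun h => hd (hFUV' ▸ Set.mem_union_left _ h)
  have hdV : d ∉ closure V := fun h => hd (hFUV' ▸ Set.mem_union_right _ h)
  have hbF : b ∉ closure Fᶜ := by rw [closure_compl, hFUV, Set.notMem_compl_iff]; exact .inl hb
  have hcF : c ∉ closure Fᶜ := by rw [closure_compl, hFUV, Set.notMem_compl_iff]; exact .inr hc
  have hP : ∀ i, RegClosed (![closure U, closure V, closure Fᶜ] i) := by
    intro i
    fin_cases i
    exacts [RegClosed.closure_of_isOpen hU, RegClosed.closure_of_isOpen hV,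
      RegClosed.closure_of_isOpen hF.isClosed.isOpen_compl]
  have hx : ∀ i j, ![b, c, d] i ∈ ![closure U, closure V, closure Fᶜ] j ↔ i = j := by
    intro i j
    fin_cases i <;> fin_cases j <;>
      simp [-closure_compl, subset_closure hb, subset_closure hc, subset_closure hd, hbV, hcU,
        hdU, hdV, hbF, hcF]
  simpa using RegClosed.exists_finset_two_pow_card_le hP ![b, c, d] hx

end Split

/-- If f is a contact-preserving Boolean isomorphism between the
regular closed algebras of X₁ and X₂ and some regular closed A ⊆ X₁ has a nonempty
connected interior while the interior of f(A) is not preconnected, then the family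
of regular closed subsets of X₁ has at least eight elements (and hence so does that
of X₂). -/
theorem stmt11 {X₁ X₂ : Type} [TopologicalSpace X₁] [TopologicalSpace X₂]
    (f : Set X₁ → Set X₂) (hf : ContactIso f)
    (A : Set X₁) (hA : RegClosed A)
    (hAc : IsConnected (interior A))
    (hfA : ¬ IsPreconnected (interior (f A))) :
    (∃ s : Finset (Set X₁), (↑s : Set (Set X₁)) ⊆ {B : Set X₁ | RegClosed B} ∧ 8 ≤ s.card) ∧
    (∃ s : Finset (Set X₂), (↑s : Set (Set X₂)) ⊆ {B : Set X₂ | RegClosed B} ∧ 8 ≤ s.card) := by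
  obtain ⟨hbij, -, -, hunion, -, hcontact⟩ := hf
  have hfA_rc : RegClosed (f A) := hbij.mapsTo hA
  obtain ⟨U, V, hU, hV, hUV, hUne, hVne, hsplit⟩ :=
    isOpen_interior.exists_open_split_of_not_isPreconnected hfA
  obtain ⟨A₁, hA₁, hfA₁⟩ := hbij.surjOn (RegClosed.closure_of_isOpen hU)
  obtain ⟨A₂, hA₂, hfA₂⟩ := hbij.surjOn (RegClosed.closure_of_isOpen hV)
  have hA₁₂ : A₁ ∪ A₂ = A := hbij.injOn (RegClosed.union hA₁ hA₂) hA <| by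
    rw [hunion _ _ hA₁ hA₂, hfA₁, hfA₂, closure_union_closure_eq_of_interior_eq hfA_rc hsplit]
  have hne₁ : A₁ ≠ A := fun h => closure_ne_of_interior_eq hV hUV hsplit hVne (h ▸ hfA₁).symm
  have hne₂ : A₂ ≠ A := fun h =>
    closure_ne_of_interior_eq hU hUV.symm (hsplit.trans (Set.union_comm U V)) hUne (h ▸ hfA₂).symm
  have hmeet : (A₁ ∩ A₂).Nonempty := RegClosed.inter_nonempty_of_union_eq hA hAc.isPreconnected
    (RegClosed.isClosed hA₁) (RegClosed.isClosed hA₂) hA₁₂ hne₁ hne₂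
  rw [hcontact _ _ hA₁ hA₂, hfA₁, hfA₂] at hmeet
  have h₂ := exists_finset_eight_le_card_of_interior_eq hfA_rc hU hV hUV hsplit hUne hVne hmeet
  exact ⟨hbij.surjOn.exists_finset_subset_le_card h₂, h₂⟩
end

section
/- Let X be a topological space with exactly three points. If X has at least eight regular closed subsets, then every subset of X is regular closed and the topology of X is discrete. -/
theorem Set.eq_univ_of_card_le_ncard {α : Type*} [Finite α] {s : Set α}
    (h : Nat.card α ≤ s.ncard) : s = Set.univ := by
  by_contra hs
  exact (Set.ncard_lt_card hs).not_ge h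

theorem Nat.card_set (α : Type*) [Finite α] : Nat.card (Set α) = 2 ^ Nat.card α := by
  have := Fintype.ofFinite α
  simp only [Nat.card_eq_fintype_card, Fintype.card_set]

theorem forall_eq_closure_interior_of_two_pow_card_le {X : Type*} [TopologicalSpace X] [Finite X]
    (h : 2 ^ Nat.card X ≤ {A : Set X | A = closure (interior A)}.ncard) (A : Set X) :
    A = closure (interior A) :=
  Set.eq_univ_iff_forall.mp (Set.eq_univ_of_card_le_ncard ((Nat.card_set X).trans_le h)) A

theorem discreteTopology_of_forall_eq_closure_interior {X : Type*} [TopologicalSpace X]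
    (h : ∀ A : Set X, A = closure (interior A)) : DiscreteTopology X :=
  discreteTopology_iff_forall_isClosed.mpr fun A => h A ▸ isClosed_closure

/-- If X is a topological space with exactly three points and X has at
least eight regular closed subsets, then every subset of X is regular closed and the
topology of X is discrete. -/
theorem stmt15 {X : Type} [TopologicalSpace X]
    (hcard : Nat.card X = 3)
    (hRC : 8 ≤ {A : Set X | A = closure (interior A)}.ncard) :
    (∀ A : Set X, A = closure (interior A)) ∧ DiscreteTopology X := by
  have : Finite X := Nat.finite_of_card_ne_zero (by omega)
  have hreg := forall_eq_closure_interior_of_two_pow_card_le (by rwa [hcard])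
  exact ⟨hreg, discreteTopology_of_forall_eq_closure_interior hreg⟩
end
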